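/- arXiv:1510.07758 — 3 statements merged into one kernel-verified Lean document; each statement's English description precedes it below -/
import Mathlib

section
/- Let P = {T_1, …, T_k} be a profile of rooted phylogenetic trees. P is compatible (there exists a tree T on the union of the species sets displaying every T_i) if and only if every valid subset U of the node set V(P) is compatible (there exists a tree on L(U) displaying T_i|L(U) for every i). -/
attribute [local instance] Classical.propDecidable

/-- A rooted phylogenetic tree on a finite species set, represented by its
(laminar) family of clusters, which contains the full leaf set and all
singletons.  By the classical correspondence, such families are exactly the
cluster sets of rooted phylogenetic trees (internal nodes with ≥ 2 children). -/
structure PhyloTree (S : Type) [DecidableEq S] where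
  leaves : Finset S
  clusters : Finset (Finset S)
  leaves_nonempty : leaves.Nonempty
  leaves_mem : leaves ∈ clusters
  singleton_mem : ∀ x ∈ leaves, ({x} : Finset S) ∈ clusters
  subset_leaves : ∀ C ∈ clusters, C ⊆ leaves
  nonempty_mem : ∀ C ∈ clusters, C.Nonempty
  laminar : ∀ C ∈ clusters, ∀ D ∈ clusters, C ∩ D = ∅ ∨ C ⊆ D ∨ D ⊆ C

variable {S : Type} [DecidableEq S]

/-- Restriction of a family of clusters to a subset `A` of species:
`{C ∩ A : C ∈ H, C ∩ A ≠ ∅}`. -/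
def restrictFam (H : Finset (Finset S)) (A : Finset S) : Finset (Finset S) :=
  (H.image (fun C => C ∩ A)).filter (fun C => C.Nonempty)

/-- The cluster set of the restriction `T|A`. -/
def restrictClusters (T : PhyloTree S) (A : Finset S) : Finset (Finset S) :=
  restrictFam T.clusters A

/-- `T` displays `T'`: every cluster of `T'` is a cluster of `T|L(T')`. -/
def Displays (T T' : PhyloTree S) : Prop :=
  T'.clusters ⊆ restrictClusters T T'.leaves

/-- `T` induces the rooted triple `ab|c`: the restriction of `T` to `{a,b,c}`
is binary with `a,b` separated from `c`, i.e. `{a,b}` is a cluster of it. -/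
def Triple (T : PhyloTree S) (a b c : S) : Prop :=
  a ∈ T.leaves ∧ b ∈ T.leaves ∧ c ∈ T.leaves ∧ a ≠ b ∧ a ≠ c ∧ b ≠ c ∧
    ({a, b} : Finset S) ∈ restrictClusters T ({a, b, c} : Finset S)

/-- A node of the profile `P` is a pair `(i, C)` with `C` a cluster (= node) of `T i`. -/
def NodeOf {k : ℕ} (P : Fin k → PhyloTree S) (u : Fin k × Finset S) : Prop :=
  u.2 ∈ (P u.1).clusters

/-- `L(U)`: the union of the clusters of the nodes in `U`. -/
def LofU {k : ℕ} (U : Finset (Fin k × Finset S)) : Finset S :=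
  U.sup (fun u => u.2)

/-- `U(i) = U ∩ V(T_i)`, as the set of clusters of the nodes of `U` in tree `i`. -/
def Ui {k : ℕ} (U : Finset (Fin k × Finset S)) (i : Fin k) : Finset (Finset S) :=
  (U.filter (fun u => u.1 = i)).image (fun u => u.2)

/-- Node (cluster) `C` is a child of node (cluster) `D` in `T`. -/
def IsChild (T : PhyloTree S) (C D : Finset S) : Prop :=
  C ∈ T.clusters ∧ D ∈ T.clusters ∧ C ⊂ D ∧
    ∀ E ∈ T.clusters, C ⊂ E → E ⊂ D → False

/-- The set of children (clusters) of the node with cluster `C` in `T`. -/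
noncomputable def ChildrenOf (T : PhyloTree S) (C : Finset S) : Finset (Finset S) :=
  T.clusters.filter (fun D => IsChild T D C)

/-- `U` is a valid (nonempty) subset of `V(P)`. -/
def Valid {k : ℕ} (P : Fin k → PhyloTree S) (U : Finset (Fin k × Finset S)) : Prop :=
  U.Nonempty ∧
  (∀ u ∈ U, NodeOf P u) ∧
  (∀ i : Fin k, 2 ≤ (Ui U i).card →
    ∃ D ∈ (P i).clusters, ∀ C ∈ Ui U i, IsChild (P i) C D) ∧
  (∀ i : Fin k, (Ui U i).sup id = (P i).leaves ∩ LofU U)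

/-- `U` is compatible: some tree on `L(U)` displays `T_i|L(U)` for every `i`. -/
def CompatU {k : ℕ} (P : Fin k → PhyloTree S) (U : Finset (Fin k × Finset S)) : Prop :=
  ∃ T : PhyloTree S, T.leaves = LofU U ∧
    ∀ i : Fin k, restrictClusters (P i) (LofU U) ⊆
      restrictClusters T ((P i).leaves ∩ LofU U)

/-- The profile `P` is compatible: some tree on `L(P)` displays every `T_i`. -/
def CompatP {k : ℕ} (P : Fin k → PhyloTree S) : Prop :=
  ∃ T : PhyloTree S, T.leaves = Finset.univ.sup (fun i => (P i).leaves) ∧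
    ∀ i : Fin k, Displays T (P i)

/-- Edge `(a,b)` of the triplet graph of the restricted profile `P|A`:
some restricted tree `T_i|A` induces a rooted triple `ab|c`. -/
def TGEdge {k : ℕ} (P : Fin k → PhyloTree S) (A : Finset S) (a b : S) : Prop :=
  a ≠ b ∧ ∃ i : Fin k, ∃ c : S, c ∈ (P i).leaves ∩ A ∧ c ≠ a ∧ c ≠ b ∧
    ∃ C ∈ restrictClusters (P i) A, a ∈ C ∧ b ∈ C ∧ c ∉ C

/-- Adjacency (within `U`) of the intersection graph `G_P(U)`. -/
def GPadj {k : ℕ} (U : Finset (Fin k × Finset S))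
    (u v : Fin k × Finset S) : Prop :=
  u ∈ U ∧ v ∈ U ∧ (u.2 ∩ v.2).Nonempty

lemma mem_restrictFam {H : Finset (Finset S)} {A C : Finset S} :
    C ∈ restrictFam H A ↔ (∃ D ∈ H, D ∩ A = C) ∧ C.Nonempty := by
  simp [restrictFam, Finset.mem_filter, Finset.mem_image]

/-- Restriction of a phylogenetic tree to a nonempty subset of its leaves. -/
noncomputable def restrictTree (T : PhyloTree S) (A : Finset S)
    (hA : A ⊆ T.leaves) (hne : A.Nonempty) : PhyloTree S where
  leaves := A
  clusters := restrictFam T.clusters A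
  leaves_nonempty := hne
  leaves_mem := by
    rw [mem_restrictFam]
    exact ⟨⟨T.leaves, T.leaves_mem, Finset.inter_eq_right.mpr hA⟩, hne⟩
  singleton_mem := fun x hx => by
    rw [mem_restrictFam]
    refine ⟨⟨{x}, T.singleton_mem x (hA hx), ?_⟩, Finset.singleton_nonempty x⟩
    rw [Finset.inter_eq_left]
    simpa using hx
  subset_leaves := fun C hC => by
    rw [mem_restrictFam] at hC
    obtain ⟨⟨D, _, rfl⟩, _⟩ := hC
    exact Finset.inter_subset_right
  nonempty_mem := fun C hC => (mem_restrictFam.mp hC).2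
  laminar := fun C hC D hD => by
    rw [mem_restrictFam] at hC hD
    obtain ⟨⟨C', hC', rfl⟩, _⟩ := hC
    obtain ⟨⟨D', hD', rfl⟩, _⟩ := hD
    rcases T.laminar C' hC' D' hD' with h | h | h
    · left
      rw [← Finset.subset_empty]
      intro x hx
      simp only [Finset.mem_inter] at hx
      rw [← h]; simp [Finset.mem_inter]
      exact ⟨hx.1.1, hx.2.1⟩
    · right; left; exact Finset.inter_subset_inter h (le_refl A)
    · right; right; exact Finset.inter_subset_inter h (le_refl A)

lemma LofU_subset {k : ℕ} {P : Fin k → PhyloTree S} {U : Finset (Fin k × Finset S)}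
    (hU : Valid P U) : LofU U ⊆ Finset.univ.sup (fun i => (P i).leaves) := by
  intro x hx
  obtain ⟨u, hu, hxu⟩ := Finset.mem_sup.mp hx
  exact Finset.mem_sup.mpr ⟨u.1, Finset.mem_univ u.1,
    (P u.1).subset_leaves u.2 (hU.2.1 u hu) hxu⟩

lemma LofU_nonempty {k : ℕ} {P : Fin k → PhyloTree S} {U : Finset (Fin k × Finset S)}
    (hU : Valid P U) : (LofU U).Nonempty := by
  obtain ⟨u, hu⟩ := hU.1
  obtain ⟨x, hx⟩ := (P u.1).nonempty_mem u.2 (hU.2.1 u hu)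
  exact ⟨x, Finset.mem_sup.mpr ⟨u, hu, hx⟩⟩

/-- **Lemma 3.** A (nonempty) profile `P` is compatible iff
every valid subset `U` of `V(P)` is compatible. -/
theorem stmt5 {k : ℕ} (hk : 0 < k) (P : Fin k → PhyloTree S) :
    CompatP P ↔
      ∀ U : Finset (Fin k × Finset S), Valid P U → CompatU P U := by
  constructor
  · rintro ⟨T, hTl, hTd⟩ U hU
    have hsub : LofU U ⊆ T.leaves := hTl ▸ LofU_subset hU
    have hne := LofU_nonempty hU
    refine ⟨restrictTree T (LofU U) hsub hne, rfl, ?_⟩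
    intro i C hC
    rw [restrictClusters, mem_restrictFam] at hC
    obtain ⟨⟨D, hD, rfl⟩, hCne⟩ := hC
    obtain ⟨⟨E, hE, hED⟩, _⟩ := mem_restrictFam.mp (hTd i hD)
    rw [restrictClusters, mem_restrictFam]
    refine ⟨⟨E ∩ LofU U, ?_, ?_⟩, hCne⟩
    · rw [restrictTree, mem_restrictFam]
      refine ⟨⟨E, hE, rfl⟩, ?_⟩
      refine hCne.mono ?_
      rw [← hED]
      intro x hx
      simp only [Finset.mem_inter] at hx ⊢
      exact ⟨hx.1.1, hx.2⟩
    · rw [← hED]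
      ext x
      simp only [Finset.mem_inter]
      tauto
  · intro h
    set U : Finset (Fin k × Finset S) :=
      Finset.univ.image (fun i => (i, (P i).leaves)) with hUdef
    have hmem : ∀ i : Fin k, (i, (P i).leaves) ∈ U := fun i =>
      Finset.mem_image.mpr ⟨i, Finset.mem_univ i, rfl⟩
    have hL : LofU U = Finset.univ.sup (fun i => (P i).leaves) := by
      rw [hUdef, LofU, Finset.sup_image]; rfl
    have hUi : ∀ i : Fin k, Ui U i = {(P i).leaves} := by
      intro i
      ext C
      simp only [Ui, Finset.mem_image, Finset.mem_filter, hUdef,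
        Finset.mem_singleton]
      constructor
      · rintro ⟨⟨j, Cj⟩, ⟨hj, hji⟩, rfl⟩
        obtain ⟨j', -, hj'⟩ := hj
        obtain ⟨rfl, h2⟩ := Prod.mk.injEq .. ▸ hj'
        subst hji; exact h2.symm ▸ rfl
      · rintro rfl
        exact ⟨(i, (P i).leaves), ⟨⟨i, Finset.mem_univ i, rfl⟩, rfl⟩, rfl⟩
    have hValid : Valid P U := by
      refine ⟨⟨_, hmem ⟨0, hk⟩⟩, ?_, ?_, ?_⟩
      · intro u hu
        obtain ⟨i, _, rfl⟩ := Finset.mem_image.mp hu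
        exact (P i).leaves_mem
      · intro i hi
        rw [hUi i, Finset.card_singleton] at hi
        omega
      · intro i
        rw [hUi i, hL]
        simp only [Finset.sup_singleton, id]
        exact (Finset.inter_eq_left.mpr ((Finset.le_sup (f := fun j => (P j).leaves) (Finset.mem_univ i) : (P i).leaves ⊆ _))).symm
    obtain ⟨T, hTl, hTd⟩ := h U hValid
    refine ⟨T, by rw [hTl, hL], ?_⟩
    intro i
    have hleq : (P i).leaves ∩ LofU U = (P i).leaves := by
      rw [hL]; exact Finset.inter_eq_left.mpr ((Finset.le_sup (f := fun j => (P j).leaves) (Finset.mem_univ i) : (P i).leaves ⊆ _))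
    intro C hC
    have hC' : C ∈ restrictClusters (P i) (LofU U) := by
      rw [restrictClusters, mem_restrictFam]
      refine ⟨⟨C, hC, ?_⟩, (P i).nonempty_mem C hC⟩
      rw [Finset.inter_eq_left]
      exact le_trans ((P i).subset_leaves C hC) (hL ▸ (Finset.le_sup (f := fun j => (P j).leaves) (Finset.mem_univ i) : (P i).leaves ⊆ _))
    have := hTd i hC'
    rwa [hleq] at this
end

section
/- Let U be a valid subset of V(P) such that for every i ∈ [k], |U(i)| ≠ 1. Then for any two species a, b ∈ L(U): (a,b) is an edge of the triplet graph of the restricted profile P|L(U) if and only if there exists a node v ∈ U with a, b ∈ L(v). -/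
attribute [local instance] Classical.propDecidable

variable {S : Type} [DecidableEq S]

lemma mem_LofU {k : ℕ} {U : Finset (Fin k × Finset S)} {x : S} :
    x ∈ LofU U ↔ ∃ u ∈ U, x ∈ u.2 := by
  simp [LofU, Finset.mem_sup]

lemma mem_Ui {k : ℕ} {U : Finset (Fin k × Finset S)} {i : Fin k} {C : Finset S} :
    C ∈ Ui U i ↔ ∃ u ∈ U, u.1 = i ∧ u.2 = C := by
  simp only [Ui, Finset.mem_image, Finset.mem_filter]
  tauto

lemma mem_restrict {T : PhyloTree S} {A C : Finset S} :
    C ∈ restrictClusters T A ↔ (∃ D ∈ T.clusters, D ∩ A = C) ∧ C.Nonempty := by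
  simp [restrictClusters, restrictFam]

lemma children_disjoint (T : PhyloTree S) {C1 C2 D : Finset S}
    (h1 : IsChild T C1 D) (h2 : IsChild T C2 D) (hne : C1 ≠ C2) : C1 ∩ C2 = ∅ := by
  rcases T.laminar C1 h1.1 C2 h2.1 with h | h | h
  · exact h
  · exact absurd (h1.2.2.2 C2 h2.1 (h.ssubset_of_ne hne) h2.2.2.1) not_false
  · exact absurd (h2.2.2.2 C1 h1.1 (h.ssubset_of_ne hne.symm) h1.2.2.1) not_false

/-- **Claim 1.** If `U` is valid and `|U(i)| ≠ 1` for all `i`,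
then for distinct species `a, b ∈ L(U)`: `(a,b)` is an edge of the triplet
graph of `P|L(U)` iff some node `v ∈ U` has `a, b ∈ L(v)`. -/
theorem stmt8 {k : ℕ} (P : Fin k → PhyloTree S)
    (U : Finset (Fin k × Finset S)) (hU : Valid P U)
    (hcard : ∀ i : Fin k, (Ui U i).card ≠ 1)
    (a b : S) (ha : a ∈ LofU U) (hb : b ∈ LofU U) (hab : a ≠ b) :
    TGEdge P (LofU U) a b ↔ ∃ u ∈ U, a ∈ u.2 ∧ b ∈ u.2 := by
  obtain ⟨hUne, hnode, hchild, hsup⟩ := hU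
  constructor
  · rintro ⟨-, i, c, hc, hca, hcb, C, hC, haC, hbC, hcC⟩
    rw [mem_restrict] at hC
    obtain ⟨⟨D, hD, rfl⟩, -⟩ := hC
    obtain ⟨haD, haL⟩ := Finset.mem_inter.mp haC
    obtain ⟨hbD, hbL⟩ := Finset.mem_inter.mp hbC
    obtain ⟨hcleaf, hcL⟩ := Finset.mem_inter.mp hc
    have hcD : c ∉ D := fun h => hcC (Finset.mem_inter.mpr ⟨h, hcL⟩)
    -- a, b, c belong to clusters of Ui
    have hmem : ∀ x : S, x ∈ (P i).leaves → x ∈ LofU U →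
        ∃ Cx ∈ Ui U i, x ∈ Cx := by
      intro x hx1 hx2
      have : x ∈ (Ui U i).sup id := by
        rw [hsup i]; exact Finset.mem_inter.mpr ⟨hx1, hx2⟩
      simpa [Finset.mem_sup] using this
    obtain ⟨Ca, hCa, haCa⟩ := hmem a ((P i).subset_leaves D hD haD) haL
    obtain ⟨Cb, hCb, hbCb⟩ := hmem b ((P i).subset_leaves D hD hbD) hbL
    obtain ⟨Cc, hCc, hcCc⟩ := hmem c hcleaf hcL
    have hcard2' : 2 ≤ (Ui U i).card := by
      have h1 : 0 < (Ui U i).card := Finset.card_pos.mpr ⟨Ca, hCa⟩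
      have := hcard i; omega
    obtain ⟨E, hE, hall⟩ := hchild i hcard2'
    by_cases hab' : Ca = Cb
    · obtain ⟨u, hu, -, rfl⟩ := mem_Ui.mp hCa
      exact ⟨u, hu, haCa, hab' ▸ hbCb⟩
    · exfalso
      have hdisj := children_disjoint (P i) (hall Ca hCa) (hall Cb hCb) hab'
      have hbCa : b ∉ Ca := fun h => by
        have : b ∈ Ca ∩ Cb := Finset.mem_inter.mpr ⟨h, hbCb⟩
        simp [hdisj] at this
      -- Ca ⊆ D
      have hCaD : Ca ⊆ D := by
        rcases (P i).laminar Ca (hall Ca hCa).1 D hD with h | h | h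
        · exact absurd (Finset.mem_inter.mpr ⟨haCa, haD⟩) (by simp [h])
        · exact h
        · exact absurd (h hbD) hbCa
      have hCaD' : Ca ⊂ D := hCaD.ssubset_of_ne (fun h => hbCa (h ▸ hbD))
      -- E ⊆ D
      have hED : E ⊆ D := by
        have hCaE : Ca ⊂ E := (hall Ca hCa).2.2.1
        rcases (P i).laminar D hD E hE with h | h | h
        · exact absurd (Finset.mem_inter.mpr ⟨haD, hCaE.1 haCa⟩) (by simp [h])
        · rcases eq_or_ne D E with rfl | hne
          · exact subset_rfl
          · exact absurd ((hall Ca hCa).2.2.2 D hD hCaD' (h.ssubset_of_ne hne)) not_false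
        · exact h
      exact hcD (hED ((hall Cc hCc).2.2.1.1 hcCc))
  · rintro ⟨u, hu, hau, hbu⟩
    set i := u.1
    have huU : u.2 ∈ Ui U i := mem_Ui.mpr ⟨u, hu, rfl, rfl⟩
    have hcard2 : 1 < (Ui U i).card := by
      have h1 : 0 < (Ui U i).card := Finset.card_pos.mpr ⟨u.2, huU⟩
      have := hcard i; omega
    obtain ⟨C', hC', hC'ne⟩ := Finset.exists_mem_ne hcard2 u.2
    obtain ⟨v, hv, hvi, hvC⟩ := mem_Ui.mp hC'
    obtain ⟨E, hE, hall⟩ := hchild i hcard2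
    have hC'cl : C' ∈ (P i).clusters := hvC ▸ hvi ▸ hnode v hv
    obtain ⟨c, hcC'⟩ := (P i).nonempty_mem C' hC'cl
    have hdisj := children_disjoint (P i) (hall C' hC') (hall u.2 huU) hC'ne
    have hcu : c ∉ u.2 := fun h => by
      have : c ∈ C' ∩ u.2 := Finset.mem_inter.mpr ⟨hcC', h⟩
      simp [hdisj] at this
    have hcL : c ∈ LofU U := mem_LofU.mpr ⟨v, hv, hvC ▸ hcC'⟩
    refine ⟨hab, i, c, Finset.mem_inter.mpr ⟨(P i).subset_leaves C' hC'cl hcC', hcL⟩,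
      fun h => hcu (h ▸ hau), fun h => hcu (h ▸ hbu),
      u.2 ∩ LofU U, ?_, Finset.mem_inter.mpr ⟨hau, ha⟩,
      Finset.mem_inter.mpr ⟨hbu, hb⟩,
      fun h => hcu (Finset.mem_inter.mp h).1⟩
    exact mem_restrict.mpr ⟨⟨u.2, hnode u hu, rfl⟩, ⟨a, Finset.mem_inter.mpr ⟨hau, ha⟩⟩⟩
end

section
/- Let U be a valid, compatible subset of V(P) with |L(U)| > 2 such that |U(i)| ≠ 1 for every i. Then the intersection graph G_P(U) is disconnected (has at least two connected components). -/
attribute [local instance] Classical.propDecidable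

variable {S : Type} [DecidableEq S]

/-! The tree `T` witnessing compatibility lives on `L(U)`. By validity and `|U(i)| ≠ 1`, each
`U(i)` consists of at least two disjoint siblings whose union is `L(T_i) ∩ L(U)`, so no cluster of
`U` is all of `L(T_i) ∩ L(U)`; as a cluster of `T_i|L(U)` it is therefore the trace of a proper
cluster of `T`, hence lies below a child of the root of `T`. The children of the root are pairwise
disjoint, so a connected component of `G_P(U)` stays below a single child `E` of the root, while
some node of `U` meets `L(U) \ E`. -/

lemma mem_restrictClusters {T : PhyloTree S} {A C : Finset S} :
    C ∈ restrictClusters T A ↔ (∃ C' ∈ T.clusters, C' ∩ A = C) ∧ C.Nonempty := by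
  simp only [restrictClusters, restrictFam, Finset.mem_filter, Finset.mem_image]

lemma IsChild.disjoint {T : PhyloTree S} {C C' D : Finset S}
    (h : IsChild T C D) (h' : IsChild T C' D) (hne : C ≠ C') : Disjoint C C' := by
  rw [Finset.disjoint_iff_inter_eq_empty]
  rcases T.laminar C h.1 C' h'.1 with hCC' | hCC' | hCC'
  · exact hCC'
  · exact (h.2.2.2 C' h'.1 (ssubset_of_subset_of_ne hCC' hne) h'.2.2.1).elim
  · exact (h'.2.2.2 C h.1 (ssubset_of_subset_of_ne hCC' hne.symm) h.2.2.1).elim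

lemma PhyloTree.exists_isChild_leaves_superset (T : PhyloTree S) {C : Finset S}
    (hC : C ∈ T.clusters) (hne : C ≠ T.leaves) : ∃ E, IsChild T E T.leaves ∧ C ⊆ E := by
  set s := T.clusters.filter (fun F => C ⊆ F ∧ F ≠ T.leaves)
  have hCs : C ∈ s := Finset.mem_filter.mpr ⟨hC, subset_rfl, hne⟩
  obtain ⟨E, hEs, hmax⟩ := s.exists_max_image Finset.card ⟨C, hCs⟩
  obtain ⟨hE, hCE, hEne⟩ := Finset.mem_filter.mp hEs
  refine ⟨E, ⟨hE, T.leaves_mem, ssubset_of_subset_of_ne (T.subset_leaves E hE) hEne, ?_⟩, hCE⟩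
  intro F hF hEF hFL
  have hFs : F ∈ s := Finset.mem_filter.mpr ⟨hF, hCE.trans hEF.subset, hFL.ne⟩
  exact (hmax F hFs).not_gt (Finset.card_lt_card hEF)

/-- Only the root of `T` restricts to the whole of `T.leaves ∩ A`. -/
lemma exists_isChild_leaves_superset_of_mem_restrictClusters {T : PhyloTree S} {A C : Finset S}
    (hC : C ∈ restrictClusters T A) (hne : C ≠ T.leaves ∩ A) :
    ∃ E, IsChild T E T.leaves ∧ C ⊆ E := by
  obtain ⟨⟨C', hC', rfl⟩, -⟩ := mem_restrictClusters.mp hC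
  have hC'ne : C' ≠ T.leaves := by
    rintro rfl
    exact hne rfl
  obtain ⟨E, hE, hC'E⟩ := T.exists_isChild_leaves_superset hC' hC'ne
  exact ⟨E, hE, Finset.inter_subset_left.trans hC'E⟩

lemma subset_LofU {k : ℕ} {U : Finset (Fin k × Finset S)} {w : Fin k × Finset S}
    (hw : w ∈ U) : w.2 ⊆ LofU U :=
  Finset.le_sup (f := fun u => u.2) hw

lemma mem_Ui_s11 {k : ℕ} {U : Finset (Fin k × Finset S)} {w : Fin k × Finset S}
    (hw : w ∈ U) : w.2 ∈ Ui U w.1 :=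
  Finset.mem_image_of_mem _ (Finset.mem_filter.mpr ⟨hw, rfl⟩)

namespace Valid

variable {k : ℕ} {P : Fin k → PhyloTree S} {U : Finset (Fin k × Finset S)}

lemma nonempty_of_mem_Ui (hU : Valid P U) {i : Fin k} {C : Finset S} (hC : C ∈ Ui U i) :
    C.Nonempty := by
  obtain ⟨w, hw, rfl⟩ := Finset.mem_image.mp hC
  obtain ⟨hwU, rfl⟩ := Finset.mem_filter.mp hw
  exact (P w.1).nonempty_mem _ (hU.2.1 w hwU)

/-- A node of `U` has a sibling in `U(i)`, which is nonempty, disjoint from it and contained in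
`L(T_i) ∩ L(U)`. -/
lemma ne_leaves_inter_LofU (hU : Valid P U) {w : Fin k × Finset S} (hw : w ∈ U)
    (hcard : (Ui U w.1).card ≠ 1) : w.2 ≠ (P w.1).leaves ∩ LofU U := by
  have hwUi := mem_Ui_s11 hw
  have htwo : 1 < (Ui U w.1).card := by
    have := Finset.card_pos.mpr ⟨_, hwUi⟩
    omega
  obtain ⟨D, -, hchild⟩ := hU.2.2.1 w.1 htwo
  obtain ⟨C, hCUi, hCw⟩ := Finset.exists_mem_ne htwo w.2
  have hdisj : Disjoint C w.2 := (hchild C hCUi).disjoint (hchild w.2 hwUi) hCw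
  have hCsub : C ⊆ (P w.1).leaves ∩ LofU U := by
    rw [← hU.2.2.2 w.1]
    exact Finset.le_sup (f := id) hCUi
  intro hweq
  obtain ⟨x, hx⟩ := hU.nonempty_of_mem_Ui hCUi
  exact Finset.disjoint_left.mp hdisj hx (hweq ▸ hCsub hx)

end Valid

lemma GPadj.reflTransGen_subset {k : ℕ} {U : Finset (Fin k × Finset S)}
    {IsBlock : Finset S → Prop}
    (hdisj : ∀ E E', IsBlock E → IsBlock E' → E ≠ E' → Disjoint E E')
    (hcover : ∀ w ∈ U, ∃ E, IsBlock E ∧ w.2 ⊆ E)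
    {u v : Fin k × Finset S} {E : Finset S} (hE : IsBlock E) (huE : u.2 ⊆ E)
    (huv : Relation.ReflTransGen (GPadj U) u v) : v.2 ⊆ E := by
  induction huv with
  | refl => exact huE
  | tail _ hadj ih =>
    obtain ⟨-, hw, x, hx⟩ := hadj
    obtain ⟨E', hE', hwE'⟩ := hcover _ hw
    obtain ⟨hxz, hxw⟩ := Finset.mem_inter.mp hx
    by_cases hEE' : E = E'
    · exact hEE' ▸ hwE'
    · exact (Finset.disjoint_left.mp (hdisj E E' hE hE' hEE') (ih hxz) (hwE' hxw)).elim

theorem stmt11_general {k : ℕ} (P : Fin k → PhyloTree S)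
    (U : Finset (Fin k × Finset S)) (hU : Valid P U) (hC : CompatU P U)
    (hcard : ∀ i : Fin k, (Ui U i).card ≠ 1) :
    ∃ u ∈ U, ∃ v ∈ U, ¬ Relation.ReflTransGen (GPadj U) u v := by
  obtain ⟨T, hTL, hTdisplays⟩ := hC
  have hcover : ∀ w ∈ U, ∃ E, IsChild T E T.leaves ∧ w.2 ⊆ E := by
    intro w hw
    have hrestrict : w.2 ∈ restrictClusters (P w.1) (LofU U) := mem_restrictClusters.mpr
      ⟨⟨w.2, hU.2.1 w hw, Finset.inter_eq_left.mpr (subset_LofU hw)⟩,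
        hU.nonempty_of_mem_Ui (mem_Ui_s11 hw)⟩
    refine exists_isChild_leaves_superset_of_mem_restrictClusters (hTdisplays w.1 hrestrict) ?_
    rw [hTL, Finset.inter_eq_right.mpr Finset.inter_subset_right]
    exact hU.ne_leaves_inter_LofU hw (hcard w.1)
  obtain ⟨u, hu⟩ := hU.1
  obtain ⟨E, hE, huE⟩ := hcover u hu
  obtain ⟨y, hyL, hyE⟩ := Finset.exists_of_ssubset hE.2.2.1
  obtain ⟨v, hv, hyv⟩ := Finset.mem_sup.mp (hTL ▸ hyL : y ∈ LofU U)
  exact ⟨u, hu, v, hv, fun huv =>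
    hyE (GPadj.reflTransGen_subset (fun _ _ h h' => h.disjoint h') hcover hE huE huv hyv)⟩

/-- If `U` is valid and compatible, `|L(U)| > 2`, and
`|U(i)| ≠ 1` for every `i`, then the intersection graph `G_P(U)` is
disconnected. -/
theorem stmt11 {k : ℕ} (P : Fin k → PhyloTree S)
    (U : Finset (Fin k × Finset S)) (hU : Valid P U) (hC : CompatU P U)
    (hL : 2 < (LofU U).card)
    (hcard : ∀ i : Fin k, (Ui U i).card ≠ 1) :
    ∃ u ∈ U, ∃ v ∈ U, ¬ Relation.ReflTransGen (GPadj U) u v :=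
  stmt11_general P U hU hC hcard
end
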